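/- For every n ≥ 1, the graph 2K_n that is the disjoint union of two copies of the complete graph K_n satisfies ρ(2K_n) = 3n; moreover the disjoint union of K_n and K_{2n} witnesses the upper bound, i.e., (K_n ∪ K_{2n}) →r 2K_n. -/

import Mathlib

/-!
Upper bound: a proper colouring of `K_n ∪ K_{2n}` spends `n` colours on the small clique, so at
least `n` vertices of the large clique carry other colours, and together with the small clique they
form a rainbow `2K_n`.

Lower bound: colour a graph on fewer than `3n` vertices properly with as few colours as possible.
The uniquely coloured vertices then form a clique, since two nonadjacent ones could share a colour.
In a rainbow vertex set `S`, a vertex sharing its colour shares it with a vertex outside `S`, so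
fewer than `n` vertices of a rainbow induced `2K_n` share their colour. Hence each of its two
cliques has a uniquely coloured vertex, and these two vertices are nonadjacent.
-/

/-- `ArrowsR G H` (written `G →r H`) means: every proper vertex coloring of `G`
contains a rainbow induced subgraph isomorphic to `H`, i.e. an induced copy of `H`
(a graph embedding) whose vertices receive pairwise distinct colors. -/
def ArrowsR {α β : Type} (G : SimpleGraph α) (H : SimpleGraph β) : Prop :=
  ∀ c : α → ℕ, (∀ u v : α, G.Adj u v → c u ≠ c v) →
    ∃ f : H ↪g G, Function.Injective fun h => c (f h)

/-- `rho H` is the minimum number of vertices of a graph `G` with `G →r H`. -/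
noncomputable def rho {β : Type} (H : SimpleGraph β) : ℕ :=
  sInf {m : ℕ | ∃ G : SimpleGraph (Fin m), ArrowsR G H}

open SimpleGraph Finset

variable {V κ : Type}

def SharesColor (c : V → κ) (v : V) : Prop := ∃ w ≠ v, c w = c v

theorem not_sharesColor_iff {c : V → κ} {v : V} :
    ¬ SharesColor c v ↔ ∀ w, c w = c v → w = v := by
  simp only [SharesColor, not_exists, not_and, not_imp_not]

theorem exists_proper_coloring_isClique_not_sharesColor [Fintype V] (G : SimpleGraph V) :
    ∃ c : V → ℕ, (∀ u v, G.Adj u v → c u ≠ c v) ∧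
      G.IsClique {v | ¬ SharesColor c v} := by
  classical
  let UsesColors (k : ℕ) :=
    ∃ c : V → ℕ, (∀ u v, G.Adj u v → c u ≠ c v) ∧ #(univ.image c) = k
  have hex : ∃ k, UsesColors k :=
    ⟨_, fun v => Fintype.equivFin V v,
      fun u v huv h => G.ne_of_adj huv (by simpa [Fin.val_inj] using h), rfl⟩
  obtain ⟨c, hc, hcard⟩ := Nat.find_spec hex
  refine ⟨c, hc, fun u hu v hv huv => ?_⟩
  rw [Set.mem_ofPred_eq, not_sharesColor_iff] at hu hv
  by_contra hnadj
  -- recolouring `v` with the colour of `u` frees the colour `c v`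
  let c' := Function.update c v (c u)
  have hcv : ∀ x, G.Adj v x → c u ≠ c x :=
    fun x hvx h => hnadj (hu x h.symm ▸ hvx.symm)
  have hc' : ∀ x y, G.Adj x y → c' x ≠ c' y := by
    intro x y hxy
    by_cases hx : x = v <;> by_cases hy : y = v
    · exact absurd (hx.trans hy.symm) hxy.ne
    · rw [hx] at hxy
      simpa [c', hx, hy] using hcv y hxy
    · rw [hy] at hxy
      simpa [c', hx, hy] using (hcv x hxy.symm).symm
    · simpa [c', hx, hy] using hc x y hxy
  have hsub : univ.image c' ⊆ (univ.image c).erase (c v) := by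
    intro a ha
    obtain ⟨x, -, rfl⟩ := mem_image.mp ha
    by_cases hx : x = v
    · simpa [c', hx] using fun h => huv (hv u h)
    · simpa [c', hx] using fun h => hx (hv x h)
  have hlt : #(univ.image c') < Nat.find hex := by
    rw [← hcard]
    exact (card_le_card hsub).trans_lt (card_erase_lt_of_mem (mem_image_of_mem c (mem_univ v)))
  exact Nat.find_min hex hlt ⟨c', hc', rfl⟩

theorem card_le_card_compl_of_sharesColor [Fintype V] [DecidableEq V] [DecidableEq κ]
    {c : V → κ} {S T : Finset V} (hS : Set.InjOn c S) (hTS : T ⊆ S)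
    (hT : ∀ v ∈ T, SharesColor c v) : #T ≤ #Sᶜ := by
  -- the vertex sharing the colour of `v ∈ T` must lie outside the rainbow set `S`
  have hmaps : Set.MapsTo c T (Sᶜ.image c) := by
    intro v hv
    obtain ⟨w, hwv, hcw⟩ := hT v hv
    have hwS : w ∉ S := fun hw => hwv (hS hw (hTS hv) hcw)
    exact hcw ▸ mem_image_of_mem c (mem_compl.mpr hwS)
  calc #T ≤ #(Sᶜ.image c) := card_le_card_of_injOn c hmaps (hS.mono (by simpa using hTS))
    _ ≤ #Sᶜ := card_image_le

theorem not_arrowsR_completeGraph_sum_of_card_lt [Fintype V] (G : SimpleGraph V) {n : ℕ}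
    (hV : Fintype.card V < 3 * n) :
    ¬ ArrowsR G (completeGraph (Fin n) ⊕g completeGraph (Fin n)) := by
  classical
  intro hG
  obtain ⟨c, hc, hclique⟩ := exists_proper_coloring_isClique_not_sharesColor G
  obtain ⟨f, hf⟩ := hG c hc
  let S := univ.map f.toEmbedding
  have hS : Set.InjOn c S := by
    rintro _ hx _ hy hxy
    obtain ⟨x, -, rfl⟩ := mem_map.mp hx
    obtain ⟨y, -, rfl⟩ := mem_map.mp hy
    exact congrArg f (hf hxy)
  have hSc : #Sᶜ < n := by
    rw [card_compl, card_map, card_univ, Fintype.card_sum, Fintype.card_fin]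
    omega
  have huniq : ∀ g : Fin n ↪ Fin n ⊕ Fin n, ∃ i, ¬ SharesColor c (f (g i)) := by
    intro g
    by_contra! h
    have hsub : univ.map (g.trans f.toEmbedding) ⊆ S := by
      rw [← Finset.map_map]
      exact map_subset_map.mpr (subset_univ _)
    have := card_le_card_compl_of_sharesColor hS hsub (by simpa using h)
    rw [card_map, card_univ, Fintype.card_fin] at this
    omega
  obtain ⟨i, hi⟩ := huniq .inl
  obtain ⟨j, hj⟩ := huniq .inr
  have := hclique hi hj (fun h => by simpa using f.injective h)
  simpa using f.map_adj_iff.mp this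

theorem injective_comp_of_completeGraph_hom {α : Type} {G : SimpleGraph V} {c : V → κ}
    (hc : ∀ u v, G.Adj u v → c u ≠ c v) (φ : completeGraph α →g G) :
    Function.Injective (c ∘ φ) :=
  fun _ _ h => by_contra fun hne => hc _ _ (φ.map_adj hne) h

theorem arrowsR_completeGraph_sum {a b k : ℕ} (hk : a + k ≤ b) :
    ArrowsR (completeGraph (Fin a) ⊕g completeGraph (Fin b))
      (completeGraph (Fin a) ⊕g completeGraph (Fin k)) := by
  classical
  intro c hc
  have hinl := injective_comp_of_completeGraph_hom hc Embedding.sumInl.toHom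
  have hinr := injective_comp_of_completeGraph_hom hc Embedding.sumInr.toHom
  let L := univ.image fun i => c (.inl i)
  have hT : k ≤ #(univ.filter fun j => c (.inr j) ∉ L) := by
    have hclash : #(univ.filter fun j => c (.inr j) ∈ L) ≤ a :=
      (card_le_card_of_injOn _ (fun j hj => (mem_filter.mp hj).2) hinr.injOn).trans
        (card_image_le.trans (by simp))
    have := card_filter_add_card_filter_not (s := univ) fun j => c (.inr j) ∈ L
    simp only [card_univ, Fintype.card_fin] at this
    omega
  obtain ⟨T', hT'T, hT'⟩ := exists_subset_card_eq hT
  let g := T'.orderEmbOfFin hT'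
  have hgT : ∀ i, c (.inr (g i)) ∉ L := fun i =>
    (mem_filter.mp (hT'T (T'.orderEmbOfFin_mem hT' i))).2
  refine ⟨(Embedding.refl).sum (Embedding.completeGraph g.toEmbedding), ?_⟩
  rintro (i | i) (j | j) h <;> simp only [Embedding.sum_apply, Sum.map_inl, Sum.map_inr] at h
  · exact congrArg _ (hinl h)
  · exact absurd (h ▸ mem_image_of_mem _ (mem_univ i)) (hgT j)
  · exact absurd (h ▸ mem_image_of_mem _ (mem_univ j)) (hgT i)
  · exact congrArg _ (g.injective (hinr h))

theorem ArrowsR.of_iso {α α' β : Type} {G : SimpleGraph α} {G' : SimpleGraph α'}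
    {H : SimpleGraph β} (h : ArrowsR G H) (e : G ≃g G') : ArrowsR G' H := by
  intro c hc
  obtain ⟨f, hf⟩ := h (c ∘ e) fun u v huv => hc _ _ (e.map_adj_iff.mpr huv)
  exact ⟨f.trans e.toEmbedding, hf⟩

theorem rho_eq_card {α β : Type} [Fintype α] {G : SimpleGraph α} {H : SimpleGraph β}
    (hG : ArrowsR G H)
    (hmin : ∀ m < Fintype.card α, ∀ G' : SimpleGraph (Fin m), ¬ ArrowsR G' H) :
    rho H = Fintype.card α := by
  have hmem : Fintype.card α ∈ {m | ∃ G' : SimpleGraph (Fin m), ArrowsR G' H} :=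
    ⟨G.overFin rfl, hG.of_iso (G.overFinIso rfl)⟩
  exact le_antisymm (Nat.sInf_le hmem)
    (le_csInf ⟨_, hmem⟩ fun m ⟨G', hG'⟩ => not_lt.mp fun hm => hmin m hm G' hG')

theorem stmt5_general (n : ℕ) :
    rho (SimpleGraph.completeGraph (Fin n) ⊕g SimpleGraph.completeGraph (Fin n)) = 3 * n ∧
    ArrowsR (SimpleGraph.completeGraph (Fin n) ⊕g SimpleGraph.completeGraph (Fin (2 * n)))
      (SimpleGraph.completeGraph (Fin n) ⊕g SimpleGraph.completeGraph (Fin n)) := by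
  have hupper := arrowsR_completeGraph_sum (a := n) (b := 2 * n) (k := n) (by omega)
  have hcard : Fintype.card (Fin n ⊕ Fin (2 * n)) = 3 * n := by
    rw [Fintype.card_sum, Fintype.card_fin, Fintype.card_fin]; omega
  refine ⟨?_, hupper⟩
  rw [rho_eq_card hupper fun m hm G =>
    not_arrowsR_completeGraph_sum_of_card_lt G (by simpa [hcard] using hm), hcard]

/-- `ρ(2K_n) = 3n`, and the disjoint union `K_n ∪ K_{2n}` witnesses the upper bound. -/
theorem stmt5 (n : ℕ) (hn : 1 ≤ n) :
    rho (SimpleGraph.completeGraph (Fin n) ⊕g SimpleGraph.completeGraph (Fin n)) = 3 * n ∧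
    ArrowsR (SimpleGraph.completeGraph (Fin n) ⊕g SimpleGraph.completeGraph (Fin (2 * n)))
      (SimpleGraph.completeGraph (Fin n) ⊕g SimpleGraph.completeGraph (Fin n)) :=
  stmt5_general n
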